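/- Let $E$ be a Banach space carrying a $\mathbb{Z}_p$ action generated by $\sigma$ ($p$ prime) with fixed-point set $F_\sigma=\{U\in E:\sigma U=U\}$, and let $A\subset E$ be a compact closed set such that $\mathbb{Z}_p(A):=\bigcup_{i=0}^{p-1}\sigma^i(A)\subset E\setminus F_\sigma$ and $\bigcap_{i=0}^{p-1}\sigma^i(A)=\emptyset$. Then $\gamma(\mathbb{Z}_p(A))\le p-1$. -/

import Mathlib

/-!
Put `φ = infDist(·, A)` and record the values of `φ` along the orbit of `x` as a vector
`v(x) ∈ ℂ^{ℤ_p}`, so that `v(σx)` is the cyclic shift of `v(x)`. On `ℤ_p(A)` this vector is never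
constant: some `σᵏx` lies in `A` (where `φ = 0`), and by `⋂ σⁱ(A) = ∅` some `σˡx` does not
(where `φ > 0`, as `A` is closed). Under the discrete Fourier transform the shift multiplies the
`n`-th coefficient by `ωⁿ`, `ω = e^{2πi/p}`, and a non-constant vector has a non-zero coefficient
with `n ≠ 0`. Raising the `n`-th coefficient to the power `n⁻¹ mod p` turns `ωⁿ` into `ω`, which
gives the `p - 1` coordinates of the required map.
-/

noncomputable section

/-- The `ℤ_p`-orbit `ℤ_p(A) = ⋃_{i=0}^{p-1} σⁱ(A)` of a set `A` under the generator
`σ` of a `ℤ_p`-action. -/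
def ZpOrbit {E : Type*} (σ : E → E) (p : ℕ) (A : Set E) : Set E :=
  ⋃ i ∈ Finset.range p, (σ^[i]) '' A

open ZMod

namespace ZMod

variable {N : ℕ} [NeZero N] {V : Type*} [AddCommGroup V] [Module ℂ V]

lemma dft_comp_add_right (Φ : ZMod N → V) (a k : ZMod N) :
    𝓕 (fun j ↦ Φ (j + a)) k = stdAddChar (a * k) • 𝓕 Φ k := by
  simp only [dft_apply, Finset.smul_sum, smul_smul]
  refine Fintype.sum_equiv (Equiv.addRight a) _ _ fun j ↦ ?_
  rw [Equiv.coe_addRight, ← AddChar.map_add_eq_mul]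
  congr 2
  ring

lemma eq_inv_smul_dft_zero_of_dft_eq_zero {Φ : ZMod N → V} (h : ∀ k ≠ 0, 𝓕 Φ k = 0)
    (j : ZMod N) : Φ j = (N : ℂ)⁻¹ • 𝓕 Φ 0 := by
  conv_lhs => rw [← dft.symm_apply_apply Φ]
  rw [invDFT_apply, Fintype.sum_eq_single 0 fun k hk ↦ by rw [h k hk, smul_zero], zero_mul,
    AddChar.map_zero_eq_one, one_smul]

lemma stdAddChar_one : stdAddChar (1 : ZMod N) = Complex.exp (2 * Real.pi * Complex.I / N) := by
  simpa using stdAddChar_coe (N := N) 1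

end ZMod

section Rotation

variable {p : ℕ} [Fact p.Prime]

lemma natCast_succ_ne_zero (m : Fin (p - 1)) : ((m + 1 : ℕ) : ZMod p) ≠ 0 := by
  rw [Ne, ZMod.natCast_eq_zero_iff]
  intro hdvd
  have := Nat.le_of_dvd m.val.succ_pos hdvd
  omega

def rotationCoords (v : ZMod p → ℂ) (m : Fin (p - 1)) : ℂ :=
  𝓕 v (m + 1 : ℕ) ^ ((m + 1 : ℕ) : ZMod p)⁻¹.val

lemma continuous_rotationCoords : Continuous (rotationCoords (p := p)) := by
  have hdft : Continuous (𝓕 : (ZMod p → ℂ) → ZMod p → ℂ) :=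
    LinearMap.continuous_of_finiteDimensional (dft : (ZMod p → ℂ) ≃ₗ[ℂ] _).toLinearMap
  exact continuous_pi fun m ↦ ((continuous_apply _).comp hdft).pow _

lemma rotationCoords_comp_add_one (v : ZMod p → ℂ) :
    rotationCoords (fun k ↦ v (k + 1)) =
      Complex.exp (2 * Real.pi * Complex.I / p) • rotationCoords v := by
  funext m
  rw [rotationCoords, dft_comp_add_right, one_mul, smul_eq_mul, mul_pow,
    ← AddChar.map_nsmul_eq_pow, nsmul_eq_mul, natCast_zmod_val,
    inv_mul_cancel₀ (natCast_succ_ne_zero m), stdAddChar_one]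
  rfl

lemma rotationCoords_ne_zero {v : ZMod p → ℂ} {i j : ZMod p} (hij : v i ≠ v j) :
    rotationCoords v ≠ 0 := by
  intro hzero
  have hdft : ∀ k ≠ 0, 𝓕 v k = 0 := by
    intro k hk
    have hpos : 0 < k.val := Nat.pos_of_ne_zero ((ZMod.val_ne_zero k).mpr hk)
    have hcoord := congrFun hzero ⟨k.val - 1, by have := k.val_lt; omega⟩
    rw [rotationCoords, Nat.sub_add_cancel hpos, natCast_zmod_val] at hcoord
    exact eq_zero_of_pow_eq_zero hcoord
  exact hij (by rw [eq_inv_smul_dft_zero_of_dft_eq_zero hdft i,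
    eq_inv_smul_dft_zero_of_dft_eq_zero hdft j])

end Rotation

section Orbit

variable {X : Type*} {σ : X → X} {p : ℕ}

def orbitProfile (σ : X → X) (φ : X → ℂ) (p : ℕ) (x : X) : ZMod p → ℂ :=
  fun k ↦ φ (σ^[k.val] x)

lemma orbitProfile_natCast (hσp : σ^[p] = id) (φ : X → ℂ) (x : X) (n : ℕ) :
    orbitProfile σ φ p x n = φ (σ^[n] x) := by
  rw [orbitProfile, ZMod.val_natCast, Function.IsPeriodicPt.iterate_mod_apply (congrFun hσp x)]

lemma orbitProfile_apply_self [NeZero p] (hσp : σ^[p] = id) (φ : X → ℂ) (x : X) :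
    orbitProfile σ φ p (σ x) = fun k ↦ orbitProfile σ φ p x (k + 1) := by
  funext k
  rw [← natCast_zmod_val k, ← Nat.cast_succ, orbitProfile_natCast hσp, orbitProfile_natCast hσp,
    Function.iterate_succ_apply]

lemma continuous_orbitProfile [TopologicalSpace X] {φ : X → ℂ} (hσ : Continuous σ)
    (hφ : Continuous φ) : Continuous (orbitProfile σ φ p) :=
  continuous_pi fun _ ↦ hφ.comp (hσ.iterate _)

lemma exists_iterate_mem_and_iterate_notMem {A : Set X} (hσp : σ^[p] = id)
    (hcap : ⋂ i ∈ Finset.range p, (σ^[i]) '' A = ∅) {x : X} (hx : x ∈ ZpOrbit σ p A) :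
    ∃ m n : ℕ, σ^[m] x ∈ A ∧ σ^[n] x ∉ A := by
  simp only [ZpOrbit, Set.mem_iUnion, Finset.mem_range, Set.mem_image] at hx
  obtain ⟨i, hi, a, ha, rfl⟩ := hx
  have hcancel : ∀ m n, m + n = p → ∀ y, σ^[m] (σ^[n] y) = y := fun m n hmn y ↦ by
    rw [← Function.iterate_add_apply, hmn, hσp, id]
  obtain ⟨j, hj, hnot⟩ : ∃ j < p, a ∉ σ^[j] '' A := by
    by_contra! hall
    exact (Set.eq_empty_iff_forall_notMem.mp hcap) a
      (Set.mem_iInter₂.mpr fun j hj ↦ hall j (Finset.mem_range.mp hj))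
  refine ⟨p - i, (p - j) + (p - i), by rwa [hcancel _ _ (by omega)],
    fun hmem ↦ hnot ⟨_, hmem, ?_⟩⟩
  rw [Function.iterate_add_apply, hcancel (p - i) i (by omega), hcancel j (p - j) (by omega)]

end Orbit

theorem zp_index_of_orbit_le_general
    {E : Type*} [NormedAddCommGroup E]
    {p : ℕ} (hp : p.Prime)
    (σ : E → E) (hσc : Continuous σ) (hσp : σ^[p] = id)
    (A : Set E) (hAcl : IsClosed A)
    (hcap : ⋂ i ∈ Finset.range p, (σ^[i]) '' A = ∅) :
    ∃ h : E → Fin (p - 1) → ℂ,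
      ContinuousOn h (ZpOrbit σ p A) ∧
      (∀ x ∈ ZpOrbit σ p A, h x ≠ 0) ∧
      ∀ x ∈ ZpOrbit σ p A,
        h (σ x) = fun m => Complex.exp (2 * Real.pi * Complex.I / p) * h x m := by
  have := Fact.mk hp
  set φ : E → ℂ := fun x ↦ (Metric.infDist x A : ℂ)
  have hφ : Continuous φ := Complex.continuous_ofReal.comp (Metric.continuous_infDist_pt A)
  refine ⟨fun x ↦ rotationCoords (orbitProfile σ φ p x),
    (continuous_rotationCoords.comp (continuous_orbitProfile hσc hφ)).continuousOn,
    fun x hx ↦ ?_, fun x _ ↦ ?_⟩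
  · obtain ⟨m, n, hm, hn⟩ := exists_iterate_mem_and_iterate_notMem hσp hcap hx
    refine rotationCoords_ne_zero (i := m) (j := n) ?_
    rw [orbitProfile_natCast hσp, orbitProfile_natCast hσp, Ne, Complex.ofReal_inj]
    exact (Metric.infDist_zero_of_mem hm).trans_ne
      ((hAcl.notMem_iff_infDist_pos ⟨_, hm⟩).mp hn).ne
  · exact (congrArg rotationCoords (orbitProfile_apply_self hσp φ x)).trans
      (rotationCoords_comp_add_one _)

/-- **Property of the `ℤ_p`-index.** Let `E` be a Banach space carrying a `ℤ_p`-action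
(`p` prime) generated by a continuous `σ` with `σ^p = id`, and let `A ⊆ E` be a
compact closed set such that `ℤ_p(A) ⊆ E \ F_σ` (no point of the orbit of `A` is fixed
by `σ`) and `⋂_{i=0}^{p-1} σⁱ(A) = ∅`.  Then `γ(ℤ_p(A)) ≤ p - 1`, i.e. there is a
continuous map `h : ℤ_p(A) → ℂ^{p-1} \ {0}` with `h(σU) = e^{2πi/p} h(U)`. -/
theorem zp_index_of_orbit_le
    {E : Type*} [NormedAddCommGroup E] [NormedSpace ℝ E] [CompleteSpace E]
    {p : ℕ} (hp : p.Prime)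
    (σ : E → E) (hσc : Continuous σ) (hσp : σ^[p] = id)
    (A : Set E) (hAcpt : IsCompact A) (hAcl : IsClosed A)
    (hfree : ∀ x ∈ ZpOrbit σ p A, σ x ≠ x)
    (hcap : ⋂ i ∈ Finset.range p, (σ^[i]) '' A = ∅) :
    ∃ h : E → Fin (p - 1) → ℂ,
      ContinuousOn h (ZpOrbit σ p A) ∧
      (∀ x ∈ ZpOrbit σ p A, h x ≠ 0) ∧
      ∀ x ∈ ZpOrbit σ p A,
        h (σ x) = fun m => Complex.exp (2 * Real.pi * Complex.I / p) * h x m :=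
  zp_index_of_orbit_le_general hp σ hσc hσp A hAcl hcap
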